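/- Lemma (Marchenko–Pastur quantile spacings). Let ϑ ∈ (0,∞) with ϑ ≠ 1, and let ν be the Marchenko–Pastur density with parameter ϑ. For n ∈ ℕ and i ∈ {1, …, n}, define the quantile γ_i^{(n)} ∈ [c₋, c₊] by ∫_{γ_i^{(n)}}^{c₊} ν(t) dt = i/n. Then there exists a constant C > 0 depending only on ϑ such that for all sufficiently large n and all i ∈ {1, …, n−1}: |γ_i^{(n)} − γ_{i+1}^{(n)}| ≤ C · n^{−2/3}. -/
import Mathlib


/-!
Lemma (Marchenko–Pastur quantile spacings).  Let `ϑ ∈ (0,∞)` with `ϑ ≠ 1` and let `ν` be the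
Marchenko–Pastur density with parameter `ϑ`, i.e.
`ν(t) = (1/(2πt)) √(((c₊−t)(t−c₋))₊)` with `c_± = (1 ± √ϑ)²`.  For `n ∈ ℕ` and
`i ∈ {1, …, n}` define the quantile `γ_i^{(n)} ∈ [c₋, c₊]` by `∫_{γ_i^{(n)}}^{c₊} ν(t) dt = i/n`.
Then there is a constant `C > 0` depending only on `ϑ` such that for all sufficiently large `n`
and all `i ∈ {1, …, n−1}`: `|γ_i^{(n)} − γ_{i+1}^{(n)}| ≤ C n^{−2/3}`.
-/

open Real Filter

noncomputable def mpDensity (ϑ t : ℝ) : ℝ :=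
  (2 * π * t)⁻¹ *
    Real.sqrt (max (((1 + Real.sqrt ϑ) ^ 2 - t) * (t - (1 - Real.sqrt ϑ) ^ 2)) 0)

section MPaux
open MeasureTheory

lemma mp_rpow_three_halves {x : ℝ} (hx : 0 ≤ x) : x ^ (3/2 : ℝ) = x * Real.sqrt x := by
  rcases hx.eq_or_lt with h | h
  · rw [← h, Real.zero_rpow (by norm_num), Real.sqrt_zero, mul_zero]
  · rw [show (3/2 : ℝ) = 1 + 1/2 by norm_num, Real.rpow_add h, Real.rpow_one,
      Real.sqrt_eq_rpow]

lemma mp_integral_sqrt_zero {d : ℝ} (hd : 0 ≤ d) :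
    (∫ x in (0:ℝ)..d, Real.sqrt x) = 2/3 * (d * Real.sqrt d) := by
  have h1 : (∫ x in (0:ℝ)..d, Real.sqrt x) = ∫ x in (0:ℝ)..d, x ^ (1/2 : ℝ) := by
    simp_rw [Real.sqrt_eq_rpow]
  rw [h1, integral_rpow (Or.inl (by norm_num)), Real.zero_rpow (by norm_num),
    show (1/2 : ℝ) + 1 = 3/2 by norm_num, mp_rpow_three_halves hd]
  ring

lemma mp_integral_sqrt_sub {a b : ℝ} (hab : a ≤ b) :
    (∫ t in a..b, Real.sqrt (t - a)) = 2/3 * ((b - a) * Real.sqrt (b - a)) := by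
  rw [intervalIntegral.integral_comp_sub_right (fun x => Real.sqrt x) a, sub_self]
  exact mp_integral_sqrt_zero (by linarith)

lemma mp_integral_sqrt_sub' {a b : ℝ} (hab : a ≤ b) :
    (∫ t in a..b, Real.sqrt (b - t)) = 2/3 * ((b - a) * Real.sqrt (b - a)) := by
  rw [intervalIntegral.integral_comp_sub_left (fun x => Real.sqrt x) b, sub_self]
  exact mp_integral_sqrt_zero (by linarith)

lemma mp_continuousOn (ϑ : ℝ) : ContinuousOn (mpDensity ϑ) {t : ℝ | t ≠ 0} := by
  unfold mpDensity
  apply ContinuousOn.mul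
  · exact ((continuous_const.mul continuous_id).continuousOn).inv₀
      (fun t ht => mul_ne_zero (mul_ne_zero two_ne_zero Real.pi_ne_zero) ht)
  · exact (Real.continuous_sqrt.comp (((continuous_const.sub continuous_id).mul
      (continuous_id.sub continuous_const)).max continuous_const)).continuousOn

lemma mp_nonneg {ϑ t : ℝ} (h0t : 0 ≤ t) : 0 ≤ mpDensity ϑ t :=
  mul_nonneg (inv_nonneg.mpr (by positivity)) (Real.sqrt_nonneg _)

lemma mp_intervalIntegrable {ϑ a b : ℝ} (hα0 : 0 < (1 - Real.sqrt ϑ) ^ 2)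
    (ha : a ∈ Set.Icc ((1 - Real.sqrt ϑ) ^ 2) ((1 + Real.sqrt ϑ) ^ 2))
    (hb : b ∈ Set.Icc ((1 - Real.sqrt ϑ) ^ 2) ((1 + Real.sqrt ϑ) ^ 2)) :
    IntervalIntegrable (mpDensity ϑ) volume a b := by
  apply ((mp_continuousOn ϑ).mono ?_).intervalIntegrable
  intro t ht
  exact ne_of_gt (lt_of_lt_of_le hα0 (Set.uIcc_subset_Icc ha hb ht).1)

lemma mp_lower {ϑ t u v : ℝ} (h0t : 0 < t) (htβ : t ≤ (1 + Real.sqrt ϑ) ^ 2)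
    (hu : 0 ≤ u) (hu' : u ≤ (1 + Real.sqrt ϑ) ^ 2 - t)
    (hv : 0 ≤ v) (hv' : v ≤ t - (1 - Real.sqrt ϑ) ^ 2) :
    (2 * π * (1 + Real.sqrt ϑ) ^ 2)⁻¹ * Real.sqrt (u * v) ≤ mpDensity ϑ t := by
  unfold mpDensity
  have hβ : 0 < (1 + Real.sqrt ϑ) ^ 2 := lt_of_lt_of_le h0t htβ
  have hπ := Real.pi_pos
  apply mul_le_mul
  · apply inv_anti₀ (by positivity)
    nlinarith
  · exact Real.sqrt_le_sqrt (le_max_of_le_left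
      (mul_le_mul hu' hv' hv (le_trans hu hu')))
  · exact Real.sqrt_nonneg _
  · positivity

lemma mp_int_edge {ϑ a b : ℝ} (hϑ : 0 ≤ ϑ) (hα0 : 0 < (1 - Real.sqrt ϑ) ^ 2)
    (ha : a ∈ Set.Icc ((1 - Real.sqrt ϑ) ^ 2) ((1 + Real.sqrt ϑ) ^ 2))
    (hb : b ∈ Set.Icc ((1 - Real.sqrt ϑ) ^ 2) ((1 + Real.sqrt ϑ) ^ 2))
    (hab : a ≤ b)
    (hedge : Real.sqrt ϑ ≤ (1 + Real.sqrt ϑ) ^ 2 - b ∨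
      Real.sqrt ϑ ≤ a - (1 - Real.sqrt ϑ) ^ 2) :
    (2 * π * (1 + Real.sqrt ϑ) ^ 2)⁻¹ * Real.sqrt (Real.sqrt ϑ) *
        (2/3 * ((b - a) * Real.sqrt (b - a)))
      ≤ ∫ t in a..b, mpDensity ϑ t := by
  have hs : 0 ≤ Real.sqrt ϑ := Real.sqrt_nonneg ϑ
  rcases hedge with hR | hL
  · calc (2 * π * (1 + Real.sqrt ϑ) ^ 2)⁻¹ * Real.sqrt (Real.sqrt ϑ) *
          (2/3 * ((b - a) * Real.sqrt (b - a)))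
        = ∫ t in a..b, (2 * π * (1 + Real.sqrt ϑ) ^ 2)⁻¹ * Real.sqrt (Real.sqrt ϑ)
            * Real.sqrt (t - a) := by
          rw [intervalIntegral.integral_const_mul, mp_integral_sqrt_sub hab]
      _ ≤ ∫ t in a..b, mpDensity ϑ t := by
          apply intervalIntegral.integral_mono_on hab
            ((by fun_prop : Continuous fun t : ℝ => (2 * π * (1 + Real.sqrt ϑ) ^ 2)⁻¹ *
              Real.sqrt (Real.sqrt ϑ) * Real.sqrt (t - a)).intervalIntegrable a b)
            (mp_intervalIntegrable hα0 ha hb)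
          intro t ht
          have h1 : (2 * π * (1 + Real.sqrt ϑ) ^ 2)⁻¹ * Real.sqrt (Real.sqrt ϑ)
              * Real.sqrt (t - a)
              = (2 * π * (1 + Real.sqrt ϑ) ^ 2)⁻¹ * Real.sqrt (Real.sqrt ϑ * (t - a)) := by
            rw [Real.sqrt_mul hs, mul_assoc]
          rw [h1]
          exact mp_lower (lt_of_lt_of_le hα0 (le_trans ha.1 ht.1))
            (le_trans ht.2 hb.2) hs (by linarith [ht.2]) (by linarith [ht.1])
            (by linarith [ht.1, ha.1])
  · calc (2 * π * (1 + Real.sqrt ϑ) ^ 2)⁻¹ * Real.sqrt (Real.sqrt ϑ) *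
          (2/3 * ((b - a) * Real.sqrt (b - a)))
        = ∫ t in a..b, (2 * π * (1 + Real.sqrt ϑ) ^ 2)⁻¹ * Real.sqrt (Real.sqrt ϑ)
            * Real.sqrt (b - t) := by
          rw [intervalIntegral.integral_const_mul, mp_integral_sqrt_sub' hab]
      _ ≤ ∫ t in a..b, mpDensity ϑ t := by
          apply intervalIntegral.integral_mono_on hab
            ((by fun_prop : Continuous fun t : ℝ => (2 * π * (1 + Real.sqrt ϑ) ^ 2)⁻¹ *
              Real.sqrt (Real.sqrt ϑ) * Real.sqrt (b - t)).intervalIntegrable a b)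
            (mp_intervalIntegrable hα0 ha hb)
          intro t ht
          have h1 : (2 * π * (1 + Real.sqrt ϑ) ^ 2)⁻¹ * Real.sqrt (Real.sqrt ϑ)
              * Real.sqrt (b - t)
              = (2 * π * (1 + Real.sqrt ϑ) ^ 2)⁻¹ * Real.sqrt ((b - t) * Real.sqrt ϑ) := by
            rw [Real.sqrt_mul' _ hs]; ring
          rw [h1]
          exact mp_lower (lt_of_lt_of_le hα0 (le_trans ha.1 ht.1))
            (le_trans ht.2 hb.2) (by linarith [ht.2]) (by linarith [hb.2, ht.2])
            hs (by linarith [ht.1, hL])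

lemma mp_int_quad {ϑ a b : ℝ} (hα0 : 0 < (1 - Real.sqrt ϑ) ^ 2)
    (ha : a ∈ Set.Icc ((1 - Real.sqrt ϑ) ^ 2) ((1 + Real.sqrt ϑ) ^ 2))
    (hb : b ∈ Set.Icc ((1 - Real.sqrt ϑ) ^ 2) ((1 + Real.sqrt ϑ) ^ 2))
    (hab : a ≤ b) :
    (b - a) ^ 2 / (12 * π * (1 + Real.sqrt ϑ) ^ 2) ≤ ∫ t in a..b, mpDensity ϑ t := by
  set m := (a + b) / 2 with hm
  have hm1 : a ≤ m := by simp [hm]; linarith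
  have hm2 : m ≤ b := by simp [hm]; linarith
  have hmem : m ∈ Set.Icc ((1 - Real.sqrt ϑ) ^ 2) ((1 + Real.sqrt ϑ) ^ 2) :=
    ⟨le_trans ha.1 hm1, le_trans hm2 hb.2⟩
  have he : (0:ℝ) ≤ (b - a) / 2 := by linarith
  have hsplit : (∫ t in a..m, mpDensity ϑ t) + (∫ t in m..b, mpDensity ϑ t)
      = ∫ t in a..b, mpDensity ϑ t :=
    intervalIntegral.integral_add_adjacent_intervals
      (mp_intervalIntegrable hα0 ha hmem) (mp_intervalIntegrable hα0 hmem hb)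
  have hnn : 0 ≤ ∫ t in m..b, mpDensity ϑ t := by
    apply intervalIntegral.integral_nonneg hm2
    intro t ht
    exact mp_nonneg (le_of_lt (lt_of_lt_of_le hα0 (le_trans hmem.1 ht.1)))
  have hmain : (2 * π * (1 + Real.sqrt ϑ) ^ 2)⁻¹ * Real.sqrt ((b - a)/2) *
      (2/3 * ((m - a) * Real.sqrt (m - a))) ≤ ∫ t in a..m, mpDensity ϑ t := by
    calc (2 * π * (1 + Real.sqrt ϑ) ^ 2)⁻¹ * Real.sqrt ((b - a)/2) *
          (2/3 * ((m - a) * Real.sqrt (m - a)))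
        = ∫ t in a..m, (2 * π * (1 + Real.sqrt ϑ) ^ 2)⁻¹ * Real.sqrt ((b - a)/2)
            * Real.sqrt (t - a) := by
          rw [intervalIntegral.integral_const_mul, mp_integral_sqrt_sub hm1]
      _ ≤ ∫ t in a..m, mpDensity ϑ t := by
          apply intervalIntegral.integral_mono_on hm1
            ((by fun_prop : Continuous fun t : ℝ => (2 * π * (1 + Real.sqrt ϑ) ^ 2)⁻¹ *
              Real.sqrt ((b - a)/2) * Real.sqrt (t - a)).intervalIntegrable a m)
            (mp_intervalIntegrable hα0 ha hmem)
          intro t ht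
          have h1 : (2 * π * (1 + Real.sqrt ϑ) ^ 2)⁻¹ * Real.sqrt ((b - a)/2)
              * Real.sqrt (t - a)
              = (2 * π * (1 + Real.sqrt ϑ) ^ 2)⁻¹ * Real.sqrt ((b - a)/2 * (t - a)) := by
            rw [Real.sqrt_mul he, mul_assoc]
          rw [h1]
          refine mp_lower (lt_of_lt_of_le hα0 (le_trans ha.1 ht.1))
            (le_trans (le_trans ht.2 hm2) hb.2) he ?_ (by linarith [ht.1])
            (by linarith [ht.1, ha.1])
          have : t ≤ (a + b) / 2 := ht.2
          have hbβ := hb.2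
          linarith
  have hval : (2 * π * (1 + Real.sqrt ϑ) ^ 2)⁻¹ * Real.sqrt ((b - a)/2) *
      (2/3 * ((m - a) * Real.sqrt (m - a)))
      = (b - a) ^ 2 / (12 * π * (1 + Real.sqrt ϑ) ^ 2) := by
    have hma : m - a = (b - a) / 2 := by rw [hm]; ring
    rw [hma]
    have hss : Real.sqrt ((b - a)/2) * Real.sqrt ((b - a)/2) = (b - a)/2 :=
      Real.mul_self_sqrt he
    have hπ : π ≠ 0 := Real.pi_ne_zero
    have hβ : ((1 + Real.sqrt ϑ) ^ 2) ≠ 0 := by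
      have := Real.sqrt_nonneg ϑ; positivity
    calc (2 * π * (1 + Real.sqrt ϑ) ^ 2)⁻¹ * Real.sqrt ((b - a)/2) *
          (2/3 * ((b - a)/2 * Real.sqrt ((b - a)/2)))
        = (Real.sqrt ((b - a)/2) * Real.sqrt ((b - a)/2)) *
            (2/3 * ((b - a)/2) * (2 * π * (1 + Real.sqrt ϑ) ^ 2)⁻¹) := by ring
      _ = (b - a)/2 * (2/3 * ((b - a)/2) * (2 * π * (1 + Real.sqrt ϑ) ^ 2)⁻¹) := by
            rw [hss]
      _ = (b - a) ^ 2 / (12 * π * (1 + Real.sqrt ϑ) ^ 2) := by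
            field_simp; ring
  linarith [hmain, hsplit, hnn, hval.ge, hval.le]

end MPaux

theorem marchenko_pastur_quantile_spacings (ϑ : ℝ) (hϑ : 0 < ϑ) (hϑ1 : ϑ ≠ 1)
    (γ : ℕ → ℕ → ℝ)
    (hγmem : ∀ n i, 1 ≤ i → i ≤ n →
      γ n i ∈ Set.Icc ((1 - Real.sqrt ϑ) ^ 2) ((1 + Real.sqrt ϑ) ^ 2))
    (hγ : ∀ n i, 1 ≤ i → i ≤ n →
      (∫ t in (γ n i)..((1 + Real.sqrt ϑ) ^ 2), mpDensity ϑ t) = (i : ℝ) / n) :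
    ∃ C > 0, ∀ᶠ n in atTop, ∀ i, 1 ≤ i → i ≤ n - 1 →
      |γ n i - γ n (i + 1)| ≤ C * (n : ℝ) ^ (-(2 : ℝ) / 3) := by
  have hπ := Real.pi_pos
  set s := Real.sqrt ϑ with hsdef
  have hs : 0 < s := Real.sqrt_pos.mpr hϑ
  have hϑs : ϑ = s ^ 2 := (Real.sq_sqrt hϑ.le).symm
  have h1s : 1 - s ≠ 0 := by
    intro h
    exact hϑ1 (by rw [hϑs, show s = 1 by linarith, one_pow])
  have hα0 : 0 < (1 - s) ^ 2 :=
    lt_of_le_of_ne (sq_nonneg _) (pow_ne_zero 2 h1s).symm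
  have hβpos : 0 < (1 + s) ^ 2 := by positivity
  have hβmem : (1 + s) ^ 2 ∈ Set.Icc ((1 - s) ^ 2) ((1 + s) ^ 2) :=
    ⟨by nlinarith, le_refl _⟩
  set K := (2 * π * (1 + s) ^ 2)⁻¹ * Real.sqrt s * (2/3) with hK
  have hKpos : 0 < K := by
    rw [hK]
    have := Real.sqrt_pos.mpr hs
    positivity
  refine ⟨K⁻¹ ^ (2/3 : ℝ), Real.rpow_pos_of_pos (inv_pos.mpr hKpos) _, ?_⟩
  obtain ⟨N, hN⟩ := exists_nat_gt (12 * π * (1 + s) ^ 2 / (4 * ϑ))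
  filter_upwards [eventually_ge_atTop (N + 1)] with n hn i hi1 hi2
  have hi2' : i + 1 ≤ n := by omega
  have hin : i ≤ n := by omega
  have hnR : (0 : ℝ) < n := by
    have : 1 ≤ n := by omega
    exact_mod_cast Nat.pos_of_ne_zero (by omega)
  have hmem_b := hγmem n i hi1 hin
  have hmem_a := hγmem n (i + 1) (by omega) hi2'
  set a := γ n (i + 1) with hadef
  set b := γ n i with hbdef
  -- the integral over the gap equals 1/n
  have hint1 : (∫ t in a..b, mpDensity ϑ t) = 1 / n := by
    have hadd := intervalIntegral.integral_add_adjacent_intervals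
      (mp_intervalIntegrable hα0 hmem_a hmem_b)
      (mp_intervalIntegrable hα0 hmem_b hβmem)
    rw [hγ n i hi1 hin, hγ n (i + 1) (by omega) hi2'] at hadd
    have hc : ((i + 1 : ℕ) : ℝ) / n = (i : ℝ) / n + 1 / n := by push_cast; ring
    rw [hc] at hadd
    linarith
  have hab : a ≤ b := by
    by_contra hlt
    push_neg at hlt
    have h0 : 0 ≤ ∫ t in b..a, mpDensity ϑ t :=
      intervalIntegral.integral_nonneg hlt.le
        (fun t ht => mp_nonneg (le_of_lt (lt_of_lt_of_le hα0 (le_trans hmem_b.1 ht.1))))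
    rw [intervalIntegral.integral_symm] at hint1
    have : (0:ℝ) < 1 / n := by positivity
    linarith
  set δ := b - a with hδdef
  have hδ0 : 0 ≤ δ := by simp [hδdef]; linarith
  -- quadratic lower bound forces the gap to be smaller than 2√ϑ
  have hquad := mp_int_quad hα0 hmem_a hmem_b hab
  rw [hint1] at hquad
  simp only [← hsdef, ← hδdef] at hquad
  have hδs : δ < 2 * s := by
    have hNn : 12 * π * (1 + s) ^ 2 / (4 * ϑ) < (n : ℝ) := by
      refine lt_trans hN ?_
      exact_mod_cast (by omega : N < n)
    have h4 : 12 * π * (1 + s) ^ 2 < 4 * ϑ * n := by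
      rw [div_lt_iff₀ (by positivity)] at hNn; linarith
    have hq2 : δ ^ 2 * n ≤ 12 * π * (1 + s) ^ 2 := by
      rw [div_le_div_iff₀ (by positivity) hnR] at hquad
      linarith
    have hsq : δ ^ 2 < (2 * s) ^ 2 := by nlinarith
    exact lt_of_pow_lt_pow_left₀ 2 (by positivity) hsq
  -- one of the two edges is at distance ≥ √ϑ from the gap
  have hedge : s ≤ (1 + s) ^ 2 - b ∨ s ≤ a - (1 - s) ^ 2 := by
    have hsum : (a - (1 - s) ^ 2) + ((1 + s) ^ 2 - b) = 4 * s - δ := by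
      simp only [hδdef]; ring
    rcases le_total ((1 + s) ^ 2 - b) (a - (1 - s) ^ 2) with h | h
    · right; linarith
    · left; linarith
  have hkey := mp_int_edge hϑ.le hα0 hmem_a hmem_b hab hedge
  rw [hint1] at hkey
  simp only [← hsdef, ← hδdef] at hkey
  have hXle : δ * Real.sqrt δ ≤ K⁻¹ * (n : ℝ)⁻¹ := by
    have h1 : K * (δ * Real.sqrt δ) ≤ (n : ℝ)⁻¹ := by
      have he : K * (δ * Real.sqrt δ)
          = (2 * π * (1 + s) ^ 2)⁻¹ * Real.sqrt s * (2/3 * (δ * Real.sqrt δ)) := by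
        rw [hK]; ring
      rw [he, ← one_div ((n : ℝ))]
      exact hkey
    calc δ * Real.sqrt δ = K⁻¹ * (K * (δ * Real.sqrt δ)) := by
          field_simp
      _ ≤ K⁻¹ * (n : ℝ)⁻¹ :=
          mul_le_mul_of_nonneg_left h1 (inv_nonneg.mpr hKpos.le)
  have habs : |γ n i - γ n (i + 1)| = δ := by
    rw [← hadef, ← hbdef, abs_of_nonneg hδ0]
  rw [habs]
  calc δ = (δ ^ (3/2 : ℝ)) ^ (2/3 : ℝ) := by
        rw [← Real.rpow_mul hδ0, show (3/2 : ℝ) * (2/3) = 1 by norm_num, Real.rpow_one]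
    _ ≤ (K⁻¹ * (n : ℝ)⁻¹) ^ (2/3 : ℝ) := by
        apply Real.rpow_le_rpow (by positivity) ?_ (by norm_num)
        rw [mp_rpow_three_halves hδ0]
        exact hXle
    _ = K⁻¹ ^ (2/3 : ℝ) * (n : ℝ) ^ (-(2 : ℝ)/3) := by
        rw [Real.mul_rpow (inv_nonneg.mpr hKpos.le) (inv_nonneg.mpr hnR.le),
          Real.inv_rpow hnR.le, ← Real.rpow_neg hnR.le]
        norm_num
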